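/- Let Γ be a group and H ≤ Γ a subgroup. Suppose there exists an H-equivariant bounded map α : H → (ℓ∞(Γ)/ℝ)' (i.e., α(h'h) = h'·α(h) for all h',h ∈ H) such that α(h₁) − α(h₀) = δ_{h₁} − δ_{h₀} for all h₀,h₁ ∈ H. Then the functional ξ := δ₁ − α̂(1) ∈ ℓ∞(Γ)' is non-trivial and H-invariant, where α̂(h) := α(h) ∘ π and π : ℓ∞(Γ) → ℓ∞(Γ)/ℝ is the quotient map. -/
import Mathlib


open scoped ENNReal

noncomputable section

/-- Evaluation at `g` as a continuous linear functional on `ℓ∞(Γ, ℝ)`. -/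
def evalCLM {Γ : Type*} (g : Γ) : lp (fun _ : Γ => ℝ) ∞ →L[ℝ] ℝ :=
  LinearMap.mkContinuous
    { toFun := fun f => f g
      map_add' := fun f f' => by
        have := lp.coeFn_add f f'
        simp [funext_iff] at this
        simp [this]
      map_smul' := fun c f => by
        have := lp.coeFn_smul c f
        simp [funext_iff] at this
        simp [this] }
    1 (fun f => by
      rw [one_mul]
      exact lp.norm_apply_le_norm ENNReal.top_ne_zero f g)

/-- Let `H ≤ Γ` and let `α : H → (ℓ∞(Γ)/ℝ)'` be a bounded
`H`-equivariant map (values realized as functionals on `ℓ∞(Γ, ℝ)` vanishing on constants,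
equivariance `α(h'h) = h'·α(h)` for the adjoint action) satisfying
`α(h₁) - α(h₀) = δ_{h₁} - δ_{h₀}` for all `h₀, h₁ ∈ H`.  Then the functional
`ξ := δ₁ - α̂(1) ∈ ℓ∞(Γ)'` is non-trivial and `H`-invariant. -/
theorem invariant_functional_of_johnson_coboundary
    {Γ : Type*} [Group Γ] (H : Subgroup Γ)
    (α : H → (lp (fun _ : Γ => ℝ) ∞ →L[ℝ] ℝ))
    -- values vanish on constants: `α h ∈ (ℓ∞(Γ)/ℝ)'`
    (hvanish : ∀ h : H, ∀ c : ℝ, ∀ f : lp (fun _ : Γ => ℝ) ∞,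
      (∀ x : Γ, f x = c) → α h f = 0)
    -- boundedness of `α`
    (hbdd : ∃ C : ℝ, ∀ h : H, ‖α h‖ ≤ C)
    -- `H`-equivariance: `α (h' * h) = h' · α h`, i.e. `α (h'h) f = α h (h'⁻¹ · f)`
    (hequiv : ∀ h' h : H, ∀ f f' : lp (fun _ : Γ => ℝ) ∞,
      (∀ x : Γ, f' x = f ((h' : Γ) * x)) → α (h' * h) f = α h f')
    -- coboundary condition: `α h₁ - α h₀ = δ_{h₁} - δ_{h₀}`
    (hcob : ∀ h₀ h₁ : H, ∀ f : lp (fun _ : Γ => ℝ) ∞,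
      α h₁ f - α h₀ f = f (h₁ : Γ) - f (h₀ : Γ)) :
    evalCLM (1 : Γ) - α 1 ≠ 0 ∧
      ∀ h : H, ∀ f f' : lp (fun _ : Γ => ℝ) ∞,
        (∀ x : Γ, f' x = f ((h : Γ) * x)) →
          (evalCLM (1 : Γ) - α 1) f' = (evalCLM (1 : Γ) - α 1) f := by
  have heval : ∀ (g : Γ) (f : lp (fun _ : Γ => ℝ) ∞), evalCLM g f = f g := fun _ _ => rfl
  constructor
  · -- nontrivial: evaluate at constant 1 function
    intro hzero
    have hmem : Memℓp (fun _ : Γ => (1 : ℝ)) ∞ := by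
      apply memℓp_infty
      refine ⟨1, ?_⟩
      rintro x ⟨y, rfl⟩
      simp
    set c1 : lp (fun _ : Γ => ℝ) ∞ := ⟨fun _ => (1 : ℝ), hmem⟩ with hc1
    have hcoe : ∀ x : Γ, c1 x = 1 := fun _ => rfl
    have h1 : (evalCLM (1 : Γ) - α 1) c1 = 1 := by
      simp [ContinuousLinearMap.sub_apply, heval, hcoe, hvanish 1 1 c1 hcoe]
    rw [hzero] at h1
    simp at h1
  · intro h f f' hf'
    have h1 : α ((1 : H)) f = α h⁻¹ f' := by
      have := hequiv h h⁻¹ f f' hf'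
      simpa using this
    have h2 := hcob 1 h⁻¹ f'
    have hfh : f' (((h : Γ))⁻¹) = f 1 := by rw [hf' ((h : Γ))⁻¹, mul_inv_cancel]
    have hf1 : f' (1 : Γ) = f (h : Γ) := by rw [hf' 1, mul_one]
    simp only [ContinuousLinearMap.sub_apply, heval]
    have hinv : ((h⁻¹ : H) : Γ) = ((h : Γ))⁻¹ := rfl
    simp only [OneMemClass.coe_one] at h2
    rw [hinv, hfh, hf1] at h2
    rw [← h1] at h2
    have h3 := hcob 1 h f
    simp only [OneMemClass.coe_one] at h3 ⊢
    linarith
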